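/- For the polynomial map F : ℂ³ → ℂ³ defined by F(x₁,x₂,x₃) = ((x₁x₂)², (x₂x₃)², x₁x₂²x₃ + x₂), every point of the punctured axis {(t,0,0) : t ∈ ℂ, t ≠ 0} belongs to S_F, witnessed by curves of the form γ(u) = (α·u², 1/u², u) with α² = t. -/

import Mathlib

open Filter Topology

/-- The asymptotic set of a map `F : ℂ³ → ℂ³`. -/
def asymptoticSet (F : ℂ × ℂ × ℂ → ℂ × ℂ × ℂ) : Set (ℂ × ℂ × ℂ) :=
  {a | ∃ ξ : ℕ → ℂ × ℂ × ℂ,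
    Tendsto (fun k => ‖ξ k‖) atTop atTop ∧ Tendsto (fun k => F (ξ k)) atTop (𝓝 a)}

/-! On the curve `γ(u) = (α u², u⁻², u)` one has `x₁x₂ = α`, `x₂x₃ = u⁻¹` and `x₁x₂²x₃ = α u⁻¹`,
so `F(γ(u)) = (α², u⁻², α u⁻¹ + u⁻²)` tends to `(α², 0, 0)` while `γ(u)` escapes through `x₃ = u`. -/

theorem mem_asymptoticSet_of_tendsto {F : ℂ × ℂ × ℂ → ℂ × ℂ × ℂ} {a : ℂ × ℂ × ℂ}
    {γ : ℝ → ℂ × ℂ × ℂ} (hγ : Tendsto (fun u => ‖γ u‖) atTop atTop)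
    (hFγ : Tendsto (fun u => F (γ u)) atTop (𝓝 a)) : a ∈ asymptoticSet F :=
  ⟨fun k => γ k, hγ.comp tendsto_natCast_atTop_atTop, hFγ.comp tendsto_natCast_atTop_atTop⟩

def polyMap (x : ℂ × ℂ × ℂ) : ℂ × ℂ × ℂ :=
  ((x.1 * x.2.1) ^ 2, (x.2.1 * x.2.2) ^ 2, x.1 * x.2.1 ^ 2 * x.2.2 + x.2.1)

noncomputable def axisCurve (α : ℂ) (u : ℝ) : ℂ × ℂ × ℂ :=
  (α * (u : ℂ) ^ 2, ((u : ℂ) ^ 2)⁻¹, (u : ℂ))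

theorem tendsto_norm_axisCurve_atTop (α : ℂ) :
    Tendsto (fun u => ‖axisCurve α u‖) atTop atTop := by
  refine tendsto_atTop_mono (fun u => ?_) tendsto_abs_atTop_atTop
  calc |u| = ‖(u : ℂ)‖ := (Complex.norm_real u).symm
    _ ≤ ‖(axisCurve α u).2‖ := norm_snd_le (axisCurve α u).2
    _ ≤ ‖axisCurve α u‖ := norm_snd_le _

theorem polyMap_axisCurve (α : ℂ) {u : ℝ} (hu : u ≠ 0) :
    polyMap (axisCurve α u) = (α ^ 2, ((u : ℂ)⁻¹) ^ 2, α * (u : ℂ)⁻¹ + ((u : ℂ)⁻¹) ^ 2) := by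
  have hu' : (u : ℂ) ≠ 0 := Complex.ofReal_ne_zero.mpr hu
  simp only [polyMap, axisCurve, Prod.mk.injEq]
  refine ⟨?_, ?_, ?_⟩ <;> field_simp

theorem tendsto_polyMap_axisCurve (α : ℂ) :
    Tendsto (fun u => polyMap (axisCurve α u)) atTop (𝓝 (α ^ 2, 0, 0)) := by
  have hinv : Tendsto (fun u : ℝ => (u : ℂ)⁻¹) atTop (𝓝 0) := by
    simpa [Function.comp_def] using (Complex.continuous_ofReal.tendsto 0).comp tendsto_inv_atTop_zero
  have hlim : Tendsto (fun u : ℝ => (α ^ 2, ((u : ℂ)⁻¹) ^ 2, α * (u : ℂ)⁻¹ + ((u : ℂ)⁻¹) ^ 2))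
      atTop (𝓝 (α ^ 2, 0, 0)) := by
    refine tendsto_const_nhds.prodMk_nhds (Tendsto.prodMk_nhds ?_ ?_)
    · simpa using hinv.pow 2
    · simpa using (hinv.const_mul α).add (hinv.pow 2)
  refine hlim.congr' ?_
  filter_upwards [eventually_ne_atTop 0] with u hu
  exact (polyMap_axisCurve α hu).symm

theorem stmt_18_general (F : ℂ × ℂ × ℂ → ℂ × ℂ × ℂ)
    (hF : F = fun x : ℂ × ℂ × ℂ =>
      ((x.1 * x.2.1) ^ 2, (x.2.1 * x.2.2) ^ 2, x.1 * x.2.1 ^ 2 * x.2.2 + x.2.1))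
    (t : ℂ) :
    ((t, (0 : ℂ), (0 : ℂ)) ∈ asymptoticSet F) ∧
    ∀ α : ℂ, α ^ 2 = t →
      Tendsto (fun u : ℝ =>
          ‖((α * (u : ℂ) ^ 2, ((u : ℂ) ^ 2)⁻¹, (u : ℂ)) : ℂ × ℂ × ℂ)‖) atTop atTop ∧
      Tendsto (fun u : ℝ => F (α * (u : ℂ) ^ 2, ((u : ℂ) ^ 2)⁻¹, (u : ℂ))) atTop
        (𝓝 (t, (0 : ℂ), (0 : ℂ))) := by
  subst hF
  have hcurve : ∀ α : ℂ, α ^ 2 = t →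
      Tendsto (fun u => ‖axisCurve α u‖) atTop atTop ∧
      Tendsto (fun u => polyMap (axisCurve α u)) atTop (𝓝 (t, 0, 0)) := by
    rintro α rfl
    exact ⟨tendsto_norm_axisCurve_atTop α, tendsto_polyMap_axisCurve α⟩
  obtain ⟨α, hα⟩ := IsAlgClosed.exists_pow_nat_eq t two_pos
  exact ⟨mem_asymptoticSet_of_tendsto (hcurve α hα).1 (hcurve α hα).2, hcurve⟩

theorem stmt_18 (F : ℂ × ℂ × ℂ → ℂ × ℂ × ℂ)
    (hF : F = fun x : ℂ × ℂ × ℂ =>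
      ((x.1 * x.2.1) ^ 2, (x.2.1 * x.2.2) ^ 2, x.1 * x.2.1 ^ 2 * x.2.2 + x.2.1))
    (t : ℂ) (ht : t ≠ 0) :
    ((t, (0 : ℂ), (0 : ℂ)) ∈ asymptoticSet F) ∧
    ∀ α : ℂ, α ^ 2 = t →
      Tendsto (fun u : ℝ =>
          ‖((α * (u : ℂ) ^ 2, ((u : ℂ) ^ 2)⁻¹, (u : ℂ)) : ℂ × ℂ × ℂ)‖) atTop atTop ∧
      Tendsto (fun u : ℝ => F (α * (u : ℂ) ^ 2, ((u : ℂ) ^ 2)⁻¹, (u : ℂ))) atTop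
        (𝓝 (t, (0 : ℂ), (0 : ℂ))) :=
  stmt_18_general F hF t
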